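/- arXiv:2210.05308 — 5 statements merged into one kernel-verified Lean document; each statement's English description precedes it below -/
import Mathlib

section
/- Ranking supermartingale convergence (Proposition 1): Let (Ω, ℱ, ℙ) be a probability space with a filtration (ℱ_i)_{i∈ℕ}, let T be a stopping time with respect to (ℱ_i), and let (X_i)_{i∈ℕ} be a sequence of integrable real-valued random variables such that each X_i is ℱ_i-measurable and X_i ≥ 0 almost surely. Suppose there exists ε > 0 such that for every i ∈ ℕ, 𝔼[X_{i+1} ∣ ℱ_i] ≤ X_i − ε·𝟙{T > i} almost surely. Then ℙ[T < ∞] = 1. -/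
open MeasureTheory

/-!
Taking expectations in the drift condition gives `𝔼 X (i+1) + ε ℙ[i < T] ≤ 𝔼 X i`, and
`ℙ[T = ∞] ≤ ℙ[i < T]` for every `i`. Telescoping, `n ε ℙ[T = ∞] ≤ 𝔼 X 0` for all `n`, because the
`X n` are nonnegative; hence `ℙ[T = ∞] = 0`.
-/

theorem nonpos_of_forall_add_le_of_nonneg {a : ℕ → ℝ} {c : ℝ} (ha : ∀ n, 0 ≤ a n)
    (hstep : ∀ n, a (n + 1) + c ≤ a n) : c ≤ 0 := by
  have htelescope : ∀ n : ℕ, a n + n * c ≤ a 0 := by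
    intro n
    induction n with
    | zero => simp
    | succ n ih => push_cast; linarith [hstep n]
  by_contra! hc
  obtain ⟨n, hn⟩ := exists_nat_gt (a 0 / c)
  rw [div_lt_iff₀ hc] at hn
  linarith [htelescope n, ha n]

theorem integral_add_mul_measureReal_le_of_condExp_le {Ω : Type*} {m m0 : MeasurableSpace Ω}
    {μ : Measure Ω} [IsFiniteMeasure μ] (hm : m ≤ m0) {X Y : Ω → ℝ} {s : Set Ω} {ε : ℝ}
    (hX : Integrable X μ) (hs : MeasurableSet s)
    (h : μ[Y|m] ≤ᵐ[μ] fun ω => X ω - ε * s.indicator (fun _ => (1 : ℝ)) ω) :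
    ∫ ω, Y ω ∂μ + ε * μ.real s ≤ ∫ ω, X ω ∂μ := by
  have hind : Integrable (fun ω => ε * s.indicator (fun _ => (1 : ℝ)) ω) μ :=
    ((integrable_const 1).indicator hs).const_mul ε
  calc ∫ ω, Y ω ∂μ + ε * μ.real s
      = ∫ ω, (μ[Y|m]) ω ∂μ + ∫ ω, ε * s.indicator (fun _ => (1 : ℝ)) ω ∂μ := by
        rw [integral_condExp hm, integral_const_mul, integral_indicator_const _ hs, smul_eq_mul,
          mul_one]
    _ ≤ ∫ ω, (X ω - ε * s.indicator (fun _ => (1 : ℝ)) ω) ∂μ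
          + ∫ ω, ε * s.indicator (fun _ => (1 : ℝ)) ω ∂μ := by
        gcongr 1
        exact integral_mono_ae integrable_condExp (hX.sub hind) h
    _ = ∫ ω, X ω ∂μ := by rw [integral_sub hX hind, sub_add_cancel]

theorem ranking_supermartingale_convergence_general
    {Ω : Type*} {m0 : MeasurableSpace Ω} (μ : Measure Ω) [IsProbabilityMeasure μ]
    (ℱ : Filtration ℕ m0) (X : ℕ → Ω → ℝ) (T : Ω → ℕ∞)
    (hTstop : ∀ i : ℕ, MeasurableSet[ℱ i] {ω | T ω ≤ (i : ℕ∞)})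
    (hint : ∀ i, Integrable (X i) μ)
    (hnonneg : ∀ i, 0 ≤ᵐ[μ] X i)
    (ε : ℝ) (hε : 0 < ε)
    (hdec : ∀ i : ℕ, μ[X (i + 1)|ℱ i]
      ≤ᵐ[μ] fun ω => X i ω - ε * Set.indicator {ω' | (i : ℕ∞) < T ω'} (fun _ => (1 : ℝ)) ω) :
    μ {ω | T ω < ⊤} = 1 := by
  have hT : IsStoppingTime ℱ T := hTstop
  have hstep : ∀ i : ℕ, ∫ ω, X (i + 1) ω ∂μ + ε * μ.real {ω | T ω = ⊤} ≤ ∫ ω, X i ω ∂μ := by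
    intro i
    have hsub : {ω | T ω = ⊤} ⊆ {ω | (i : ℕ∞) < T ω} := fun ω (hω : T ω = ⊤) => by simp [hω]
    calc _ ≤ ∫ ω, X (i + 1) ω ∂μ + ε * μ.real {ω | (i : ℕ∞) < T ω} := by
          gcongr; exact measure_ne_top μ _
      _ ≤ ∫ ω, X i ω ∂μ := integral_add_mul_measureReal_le_of_condExp_le (ℱ.le i) (hint i)
          (ℱ.le i _ (hT.measurableSet_gt i)) (hdec i)
  have hnull : μ {ω | T ω = ⊤} = 0 := by
    have hle := nonpos_of_forall_add_le_of_nonneg (fun i => integral_nonneg_of_ae (hnonneg i)) hstep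
    rw [← measureReal_eq_zero_iff]
    exact le_antisymm (nonpos_of_mul_nonpos_right hle hε) measureReal_nonneg
  have hfinite : {ω | T ω < ⊤} = {ω | T ω = ⊤}ᶜ := by ext ω; simp [lt_top_iff_ne_top]
  have hmeas : MeasurableSet {ω | T ω = ⊤} := hT.measurableSet_eq_top
  rwa [hfinite, prob_compl_eq_one_iff hmeas]

/-- Ranking supermartingale convergence: if `(X i)` is a sequence of nonnegative integrable
adapted random variables and `T` is a stopping time such that
`𝔼[X (i+1) ∣ ℱ i] ≤ X i - ε · 𝟙{T > i}` almost surely for every `i`, with `ε > 0`,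
then `T` is almost surely finite, i.e. `ℙ[T < ∞] = 1`. -/
theorem ranking_supermartingale_convergence
    {Ω : Type*} {m0 : MeasurableSpace Ω} (μ : Measure Ω) [IsProbabilityMeasure μ]
    (ℱ : Filtration ℕ m0) (X : ℕ → Ω → ℝ) (T : Ω → ℕ∞)
    (hTstop : ∀ i : ℕ, MeasurableSet[ℱ i] {ω | T ω ≤ (i : ℕ∞)})
    (hadapted : ∀ i, StronglyMeasurable[ℱ i] (X i))
    (hint : ∀ i, Integrable (X i) μ)
    (hnonneg : ∀ i, 0 ≤ᵐ[μ] X i)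
    (ε : ℝ) (hε : 0 < ε)
    (hdec : ∀ i : ℕ, μ[X (i + 1)|ℱ i]
      ≤ᵐ[μ] fun ω => X i ω - ε * Set.indicator {ω' | (i : ℕ∞) < T ω'} (fun _ => (1 : ℝ)) ω) :
    μ {ω | T ω < ⊤} = 1 :=
  ranking_supermartingale_convergence_general μ ℱ X T hTstop hint hnonneg ε hε hdec
end

section
/- Quantitative ranking supermartingale bound: Let (Ω, ℱ, ℙ) be a probability space with a filtration (ℱ_i)_{i∈ℕ}, let T be a stopping time with respect to (ℱ_i), and let (X_i)_{i∈ℕ} be a sequence of integrable real-valued random variables such that each X_i is ℱ_i-measurable and X_i ≥ 0 almost surely. Suppose there exists ε > 0 such that for every i ∈ ℕ, 𝔼[X_{i+1} ∣ ℱ_i] ≤ X_i − ε·𝟙{T > i} almost surely. Then ε · 𝔼[T] ≤ 𝔼[X_0]; in particular 𝔼[T] is finite. -/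
/-!
Taking expectations in the drift condition gives `𝔼[X (i+1)] ≤ 𝔼[X i] - ε ℙ(T > i)`.
Telescoping and `X n ≥ 0` yield `ε ∑_{i<n} ℙ(T > i) ≤ 𝔼[X 0]` for every `n`, and the
tail-sum formula `𝔼[T] = ∑_i ℙ(T > i)` turns this into `ε 𝔼[T] ≤ 𝔼[X 0]`.
-/

open MeasureTheory Filter
open scoped ENNReal

theorem ENat.toENNReal_eq_tsum_indicator (n : ℕ∞) :
    (n : ℝ≥0∞) = ∑' i : ℕ, {i : ℕ | (i : ℕ∞) < n}.indicator 1 i := by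
  rw [← tsum_subtype]
  simp only [Pi.one_apply, ENNReal.tsum_set_one]
  cases n with
  | top => simp
  | coe k =>
    have : {i : ℕ | (i : ℕ∞) < k} = ↑(Finset.range k) := by ext; simp
    rw [this, Set.encard_coe_eq_coe_finsetCard, Finset.card_range]

theorem Finset.sum_range_le_sub_of_le_sub {a b : ℕ → ℝ} (h : ∀ i, a (i + 1) ≤ a i - b i)
    (n : ℕ) : ∑ i ∈ Finset.range n, b i ≤ a 0 - a n :=
  calc ∑ i ∈ Finset.range n, b i ≤ ∑ i ∈ Finset.range n, (a i - a (i + 1)) :=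
        Finset.sum_le_sum fun i _ => by linarith [h i]
    _ = a 0 - a n := Finset.sum_range_sub' a n

theorem ENNReal.tsum_ofReal_le_ofReal_of_sum_range_le {b : ℕ → ℝ} {c : ℝ} (hb : ∀ i, 0 ≤ b i)
    (h : ∀ n, ∑ i ∈ Finset.range n, b i ≤ c) :
    ∑' i, ENNReal.ofReal (b i) ≤ ENNReal.ofReal c :=
  ENNReal.tsum_le_of_sum_range_le fun n => by
    rw [← ENNReal.ofReal_sum_of_nonneg fun i _ => hb i]
    exact ENNReal.ofReal_le_ofReal (h n)

namespace MeasureTheory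

variable {Ω : Type*} {m0 : MeasurableSpace Ω} {μ : Measure Ω}

theorem lintegral_enat_eq_tsum_measure_lt {T : Ω → ℕ∞}
    (hT : ∀ i : ℕ, MeasurableSet {ω | (i : ℕ∞) < T ω}) :
    ∫⁻ ω, (T ω : ℝ≥0∞) ∂μ = ∑' i : ℕ, μ {ω | (i : ℕ∞) < T ω} := by
  have hT_eq (ω : Ω) : (T ω : ℝ≥0∞) = ∑' i : ℕ, {ω | (i : ℕ∞) < T ω}.indicator 1 ω :=
    ENat.toENNReal_eq_tsum_indicator (T ω)
  simp_rw [hT_eq]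
  rw [lintegral_tsum fun i => (measurable_one.indicator (hT i)).aemeasurable]
  exact tsum_congr fun i => lintegral_indicator_one (hT i)

theorem integral_le_of_condExp_le {m : MeasurableSpace Ω} (hm : m ≤ m0)
    [SigmaFinite (μ.trim hm)] {f g : Ω → ℝ} (hg : Integrable g μ) (h : μ[f|m] ≤ᵐ[μ] g) :
    ∫ ω, f ω ∂μ ≤ ∫ ω, g ω ∂μ :=
  integral_condExp (μ := μ) (f := f) hm ▸ integral_mono_ae integrable_condExp hg h

end MeasureTheory

theorem ranking_supermartingale_expectation_bound_general
    {Ω : Type*} {m0 : MeasurableSpace Ω} (μ : Measure Ω) [IsProbabilityMeasure μ]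
    (ℱ : Filtration ℕ m0) (X : ℕ → Ω → ℝ) (T : Ω → ℕ∞)
    (hTstop : ∀ i : ℕ, MeasurableSet[ℱ i] {ω | T ω ≤ (i : ℕ∞)})
    (hint : ∀ i, Integrable (X i) μ)
    (hnonneg : ∀ i, 0 ≤ᵐ[μ] X i)
    (ε : ℝ) (hε : 0 < ε)
    (hdec : ∀ i : ℕ, μ[X (i + 1)|ℱ i]
      ≤ᵐ[μ] fun ω => X i ω - ε * Set.indicator {ω' | (i : ℕ∞) < T ω'} (fun _ => (1 : ℝ)) ω) :
    ENNReal.ofReal ε * ∫⁻ ω, (ENat.toENNReal (T ω)) ∂μ ≤ ENNReal.ofReal (∫ ω, X 0 ω ∂μ)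
      ∧ ∫⁻ ω, (ENat.toENNReal (T ω)) ∂μ < ⊤ := by
  set S : ℕ → Set Ω := fun i => {ω | (i : ℕ∞) < T ω}
  have hS (i : ℕ) : MeasurableSet (S i) :=
    ℱ.le i _ (by simpa only [Set.compl_ofPred, not_le] using (hTstop i).compl)
  have hstep (i : ℕ) : ∫ ω, X (i + 1) ω ∂μ ≤ ∫ ω, X i ω ∂μ - ε * μ.real (S i) := by
    have hind : Integrable ((S i).indicator (1 : Ω → ℝ)) μ := (integrable_const 1).indicator (hS i)
    calc ∫ ω, X (i + 1) ω ∂μ ≤ ∫ ω, X i ω - ε * (S i).indicator 1 ω ∂μ :=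
          integral_le_of_condExp_le (ℱ.le i) ((hint i).sub (hind.const_mul ε)) (hdec i)
      _ = ∫ ω, X i ω ∂μ - ε * μ.real (S i) := by
          rw [integral_sub (hint i) (hind.const_mul ε), integral_const_mul,
            integral_indicator_one (hS i)]
  have hsum (n : ℕ) : ∑ i ∈ Finset.range n, ε * μ.real (S i) ≤ ∫ ω, X 0 ω ∂μ :=
    (Finset.sum_range_le_sub_of_le_sub (a := fun i => ∫ ω, X i ω ∂μ) hstep n).trans
      (sub_le_self _ (integral_nonneg_of_ae (hnonneg n)))
  have hbound : ENNReal.ofReal ε * ∫⁻ ω, (T ω : ℝ≥0∞) ∂μ ≤ ENNReal.ofReal (∫ ω, X 0 ω ∂μ) :=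
    calc ENNReal.ofReal ε * ∫⁻ ω, (T ω : ℝ≥0∞) ∂μ
        = ∑' i, ENNReal.ofReal (ε * μ.real (S i)) := by
          simp only [S, lintegral_enat_eq_tsum_measure_lt hS, ← ENNReal.tsum_mul_left,
            ENNReal.ofReal_mul hε.le, measureReal_def, ENNReal.ofReal_toReal (measure_ne_top μ _)]
      _ ≤ ENNReal.ofReal (∫ ω, X 0 ω ∂μ) :=
          ENNReal.tsum_ofReal_le_ofReal_of_sum_range_le (fun i => by positivity) hsum
  exact ⟨hbound, ENNReal.lt_top_of_mul_ne_top_right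
    (ne_top_of_le_ne_top ENNReal.ofReal_ne_top hbound) (ENNReal.ofReal_pos.2 hε).ne'⟩

/-- Quantitative ranking supermartingale bound: if `(X i)` is a sequence of nonnegative
integrable adapted random variables and `T` is a stopping time such that
`𝔼[X (i+1) ∣ ℱ i] ≤ X i - ε · 𝟙{T > i}` almost surely for every `i`, with `ε > 0`,
then `ε · 𝔼[T] ≤ 𝔼[X 0]`; in particular the (a priori possibly infinite) expectation
`𝔼[T]` is finite. -/
theorem ranking_supermartingale_expectation_bound
    {Ω : Type*} {m0 : MeasurableSpace Ω} (μ : Measure Ω) [IsProbabilityMeasure μ]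
    (ℱ : Filtration ℕ m0) (X : ℕ → Ω → ℝ) (T : Ω → ℕ∞)
    (hTstop : ∀ i : ℕ, MeasurableSet[ℱ i] {ω | T ω ≤ (i : ℕ∞)})
    (hadapted : ∀ i, StronglyMeasurable[ℱ i] (X i))
    (hint : ∀ i, Integrable (X i) μ)
    (hnonneg : ∀ i, 0 ≤ᵐ[μ] X i)
    (ε : ℝ) (hε : 0 < ε)
    (hdec : ∀ i : ℕ, μ[X (i + 1)|ℱ i]
      ≤ᵐ[μ] fun ω => X i ω - ε * Set.indicator {ω' | (i : ℕ∞) < T ω'} (fun _ => (1 : ℝ)) ω) :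
    ENNReal.ofReal ε * ∫⁻ ω, (ENat.toENNReal (T ω)) ∂μ ≤ ENNReal.ofReal (∫ ω, X 0 ω ∂μ)
      ∧ ∫⁻ ω, (ENat.toENNReal (T ω)) ∂μ < ⊤ :=
  ranking_supermartingale_expectation_bound_general μ ℱ X T hTstop hint hnonneg ε hε hdec
end

section
/- Theorem 1 (RASMs certify probabilistic reach-avoid): Consider a discrete-time stochastic dynamical system on a compact Borel set 𝒳 ⊆ ℝ^m given by a Borel-measurable dynamics function f : ℝ^m × ℝ^n × ℝ^p → ℝ^m, a Borel-measurable control policy π : ℝ^m → ℝ^n, and a probability distribution d on ℝ^p, with f(x, π(x), w) ∈ 𝒳 whenever x ∈ 𝒳 and w lies in the support of d. Let 𝒳₀ ⊆ 𝒳 be a Borel set of initial states, and let 𝒳_t, 𝒳_u ⊆ 𝒳 be disjoint Borel target and unsafe sets. Fix p ∈ [0,1). On a probability space (Ω, ℱ, ℙ), let (ω_t)_{t∈ℕ} be an independent sequence of ℝ^p-valued random variables each with law d, fix x₀ ∈ 𝒳₀, and define the trajectory process (x_t)_{t∈ℕ} by x_{t+1} = f(x_t, π(x_t), ω_t). If there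 exists a continuous function V : 𝒳 → ℝ that is a reach-avoid supermartingale (RASM) with respect to 𝒳_t, 𝒳_u and p, then ℙ[ ∃ t ∈ ℕ : x_t ∈ 𝒳_t and x_{t'} ∉ 𝒳_u for all t' ≤ t ] ≥ p. -/
/-!
Let `τ` be the first time the trajectory leaves `G = {x ∈ 𝒳 \ Xt | V x < 1/(1-p)}`. The noise
`ω t` is independent of the past `ω 0, …, ω (t-1)`, which determines `x t` and the event `τ > t`;
so the expected decrease gives `E[V(x (t+1)); τ > t] + ε P(τ > t) ≤ E[V(x t); τ > t]`, while
`V ≥ 1/(1-p)` on `{τ = t, x t ∉ Xt}` gives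
`E[V(x t); τ > t] + P(τ = t, x t ∉ Xt) / (1-p) ≤ E[V(x t); τ ≥ t]`. Telescoping from `V x₀ ≤ 1`
yields `ε Σ_t P(τ > t) ≤ 1`, so `τ < ∞` almost surely, and `P(x τ ∉ Xt) ≤ 1 - p`. On the
remaining event `x τ ∈ Xt`, and every earlier state has `V < 1/(1-p)`, so it avoids `Xu`.

The expectations are lower Lebesgue integrals of `ofReal ∘ V`, extended by `0` off `𝒳`, which
removes all integrability side conditions; the trajectory stays in `𝒳` almost surely because the
noise lies in the support of `d` almost surely.
-/

open MeasureTheory ProbabilityTheory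
open scoped ENNReal

def measureSupport {E : Type*} [TopologicalSpace E] [MeasurableSpace E]
    (d : Measure E) : Set E :=
  {w | ∀ U : Set E, IsOpen U → w ∈ U → 0 < d U}

lemma ContinuousOn.measurable_indicator {X : Type*} [TopologicalSpace X] [MeasurableSpace X]
    [OpensMeasurableSpace X] {K : Set X} {V : X → ℝ} (hV : ContinuousOn V K)
    (hK : MeasurableSet K) : Measurable (K.indicator V) := by
  classical
  rw [← Set.piecewise_eq_indicator]
  exact hV.measurable_piecewise continuousOn_const hK

lemma lintegral_ofReal_add_le_ofReal {W : Type*} [MeasurableSpace W] {d : Measure W}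
    {φ : W → ℝ} (hφ : Integrable φ d) (hφ0 : 0 ≤ᵐ[d] φ) {a ε : ℝ} (hε : 0 ≤ ε)
    (h : ∫ w, φ w ∂d ≤ a - ε) :
    ∫⁻ w, ENNReal.ofReal (φ w) ∂d + ENNReal.ofReal ε ≤ ENNReal.ofReal a := by
  rw [← ofReal_integral_eq_lintegral_ofReal hφ hφ0,
    ← ENNReal.ofReal_add (integral_nonneg_of_ae hφ0) hε]
  exact ENNReal.ofReal_le_ofReal (by linarith)

lemma lintegral_ofReal_indicator_comp_add_le {X W : Type*} [TopologicalSpace X]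
    [MeasurableSpace X] [OpensMeasurableSpace X] [MeasurableSpace W] {K : Set X}
    (hK : IsCompact K) (hKm : MeasurableSet K) {V : X → ℝ} (hV : ContinuousOn V K)
    (hV0 : ∀ y ∈ K, 0 ≤ V y) {d : Measure W} [IsFiniteMeasure d] {φ : W → X}
    (hφ : Measurable φ) (hφK : ∀ᵐ w ∂d, φ w ∈ K) {a ε : ℝ} (hε : 0 ≤ ε)
    (h : ∫ w, V (φ w) ∂d ≤ a - ε) :
    ∫⁻ w, ENNReal.ofReal (K.indicator V (φ w)) ∂d + ENNReal.ofReal ε ≤ ENNReal.ofReal a := by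
  have hext : (fun w => K.indicator V (φ w)) =ᵐ[d] fun w => V (φ w) :=
    hφK.mono fun w hw => Set.indicator_of_mem hw V
  obtain ⟨C, hC⟩ := hK.exists_bound_of_continuousOn hV
  refine lintegral_ofReal_add_le_ofReal ?_ (ae_of_all _ fun w => Set.indicator_nonneg hV0 _) hε
    (by rwa [integral_congr_ae hext])
  refine .of_bound ((hV.measurable_indicator hKm).comp hφ).aestronglyMeasurable C ?_
  filter_upwards [hφK] with w hw
  rw [Set.indicator_of_mem hw]
  exact hC _ hw

lemma measureSupport_eq_support {E : Type*} [TopologicalSpace E] [MeasurableSpace E]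
    (d : Measure E) : measureSupport d = d.support := by
  rw [Measure.support_eq_forall_isOpen]
  exact Set.ext fun w => forall_congr' fun U => forall_comm

lemma ofReal_le_measure_of_mul_measure_compl_le {Ω : Type*} {mΩ : MeasurableSpace Ω}
    {μ : Measure Ω} [IsProbabilityMeasure μ] {E : Set Ω} {p : ℝ} (hp0 : 0 ≤ p) (hp1 : p < 1)
    (h : ENNReal.ofReal (1 / (1 - p)) * μ Eᶜ ≤ 1) : ENNReal.ofReal p ≤ μ E := by
  have hcompl : μ Eᶜ ≤ ENNReal.ofReal (1 - p) := by
    rwa [one_div, ENNReal.ofReal_inv_of_pos (by linarith), mul_comm, ← ENNReal.le_inv_iff_mul_le,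
      inv_inv] at h
  have hsum : ENNReal.ofReal p + ENNReal.ofReal (1 - p) = 1 := by
    rw [← ENNReal.ofReal_add hp0 (by linarith), add_sub_cancel, ENNReal.ofReal_one]
  calc ENNReal.ofReal p = 1 - ENNReal.ofReal (1 - p) := by
        rw [← hsum, ENNReal.add_sub_cancel_right ENNReal.ofReal_ne_top]
    _ ≤ μ E := by
      rw [tsub_le_iff_right, ← measure_univ (μ := μ)]
      exact (measure_univ_le_add_compl E).trans (by gcongr)

namespace ProbabilityTheory

variable {Ω α β : Type*} {m mΩ : MeasurableSpace Ω} [MeasurableSpace α] [MeasurableSpace β]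
  {μ : Measure Ω} [IsFiniteMeasure μ] {W : Ω → β} {Z : Ω → α} {H : α → β → ℝ≥0∞}

lemma IndepFun.lintegral_comp_eq_lintegral_lintegral (hZW : IndepFun Z W μ) (hZ : Measurable Z)
    (hW : Measurable W) (hH : Measurable (Function.uncurry H)) :
    ∫⁻ ϖ, H (Z ϖ) (W ϖ) ∂μ = ∫⁻ ϖ, ∫⁻ w, H (Z ϖ) w ∂(μ.map W) ∂μ := by
  calc ∫⁻ ϖ, H (Z ϖ) (W ϖ) ∂μ
      = ∫⁻ zw, Function.uncurry H zw ∂((μ.map Z).prod (μ.map W)) := by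
        rw [← hZW.map_prod_eq_prod_map_map hZ.aemeasurable hW.aemeasurable,
          lintegral_map hH (hZ.prodMk hW)]
        rfl
    _ = ∫⁻ ϖ, ∫⁻ w, H (Z ϖ) w ∂(μ.map W) ∂μ := by
        rw [lintegral_prod _ hH.aemeasurable, lintegral_map hH.lintegral_prod_right' hZ]
        rfl

lemma Indep.setLIntegral_comp_eq (hm : m ≤ mΩ)
    (hind : Indep m (MeasurableSpace.comap W ‹_›) μ) (hW : Measurable W)
    (hZ : Measurable[m] Z) {A : Set Ω} (hA : MeasurableSet[m] A)
    (hH : Measurable (Function.uncurry H)) :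
    ∫⁻ ϖ in A, H (Z ϖ) (W ϖ) ∂μ = ∫⁻ ϖ in A, ∫⁻ w, H (Z ϖ) w ∂(μ.map W) ∂μ := by
  -- the pair `(Z, 1_A)` is `m`-measurable, hence independent of `W`
  have hZA : Measurable[m] fun ϖ => (Z ϖ, A.indicator (1 : Ω → ℝ≥0∞) ϖ) :=
    hZ.prodMk (measurable_const.indicator hA)
  have hindep : IndepFun (fun ϖ => (Z ϖ, A.indicator (1 : Ω → ℝ≥0∞) ϖ)) W μ := by
    rw [IndepFun_iff_Indep]
    exact indep_of_indep_of_le_left hind hZA.comap_le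
  have key := hindep.lintegral_comp_eq_lintegral_lintegral (hZA.mono hm le_rfl) hW
    (H := fun zc w => zc.2 * H zc.1 w)
    (by exact measurable_fst.snd.mul (hH.comp (measurable_fst.fst.prodMk measurable_snd)))
  have hconst : ∀ z c, ∫⁻ w, c * H z w ∂(μ.map W) = c * ∫⁻ w, H z w ∂(μ.map W) := fun z c =>
    lintegral_const_mul c (hH.comp measurable_prodMk_left)
  simp only [hconst] at key
  rw [← lintegral_indicator (hm A hA), ← lintegral_indicator (hm A hA)]
  convert key using 2 <;> funext ϖ <;> by_cases h : ϖ ∈ A <;> simp [h]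

end ProbabilityTheory

section Chain

variable {Ω X W : Type*} {mΩ : MeasurableSpace Ω} [MeasurableSpace X] [mW : MeasurableSpace W]

structure IsNoiseDrivenChain (μ : Measure Ω) (d : Measure W) (g : X → W → X) (x₀ : X)
    (ω : ℕ → Ω → W) (x : ℕ → Ω → X) : Prop where
  measurable_noise : ∀ t, Measurable (ω t)
  iIndepFun_noise : iIndepFun ω μ
  map_noise : ∀ t, μ.map (ω t) = d
  measurable_step : Measurable (Function.uncurry g)
  zero : ∀ ϖ, x 0 ϖ = x₀
  succ : ∀ t ϖ, x (t + 1) ϖ = g (x t ϖ) (ω t ϖ)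

abbrev noiseBefore (ω : ℕ → Ω → W) (t : ℕ) : MeasurableSpace Ω :=
  ⨆ i < t, mW.comap (ω i)

variable {μ : Measure Ω} {d : Measure W} {g : X → W → X} {x₀ : X} {ω : ℕ → Ω → W}
  {x : ℕ → Ω → X}

lemma noiseBefore_mono : Monotone (noiseBefore ω) := fun _ _ hst =>
  iSup₂_mono' fun i hi => ⟨i, hi.trans_le hst, le_rfl⟩

lemma measurable_noiseBefore_succ (t : ℕ) : Measurable[noiseBefore ω (t + 1)] (ω t) :=
  Measurable.of_comap_le (le_iSup₂ (f := fun i (_ : i < t + 1) => mW.comap (ω i)) t t.lt_succ_self)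

namespace IsNoiseDrivenChain

variable (hx : IsNoiseDrivenChain μ d g x₀ ω x)
include hx

lemma noiseBefore_le (t : ℕ) : noiseBefore ω t ≤ mΩ :=
  iSup₂_le fun i _ => (hx.measurable_noise i).comap_le

lemma indep_noiseBefore (t : ℕ) : Indep (noiseBefore ω t) (mW.comap (ω t)) μ := by
  have := indep_iSup_of_disjoint (fun i => (hx.measurable_noise i).comap_le) hx.iIndepFun_noise
    (Set.disjoint_singleton_right.2 (lt_irrefl t) : Disjoint (Set.Iio t) {t})
  simpa using this

lemma measurable_noiseBefore (t : ℕ) : Measurable[noiseBefore ω t] (x t) := by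
  induction t with
  | zero => simp [funext hx.zero]
  | succ t ih =>
    rw [funext (hx.succ t)]
    exact hx.measurable_step.comp ((ih.mono (noiseBefore_mono t.le_succ) le_rfl).prodMk
      (measurable_noiseBefore_succ t))

lemma measurable (t : ℕ) : Measurable (x t) :=
  (hx.measurable_noiseBefore t).mono (hx.noiseBefore_le t) le_rfl

lemma setLIntegral_succ_eq {t : ℕ} {A : Set Ω} (hA : MeasurableSet[noiseBefore ω t] A)
    [IsFiniteMeasure μ] {h : X → ℝ≥0∞} (hh : Measurable h) :
    ∫⁻ ϖ in A, h (x (t + 1) ϖ) ∂μ = ∫⁻ ϖ in A, ∫⁻ w, h (g (x t ϖ) w) ∂d ∂μ := by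
  simp_rw [hx.succ, ← hx.map_noise t]
  exact (hx.indep_noiseBefore t).setLIntegral_comp_eq (hx.noiseBefore_le t) (hx.measurable_noise t)
    (hx.measurable_noiseBefore t) hA (H := fun y w => h (g y w))
    (by exact hh.comp hx.measurable_step)

lemma ae_forall_mem {K : Set X} {S : Set W} (hx₀ : x₀ ∈ K) (hS : ∀ᵐ w ∂d, w ∈ S)
    (hK : ∀ y ∈ K, ∀ w ∈ S, g y w ∈ K) :
    ∀ᵐ ϖ ∂μ, ∀ t, x t ϖ ∈ K := by
  have hωS : ∀ t, ∀ᵐ ϖ ∂μ, ω t ϖ ∈ S := fun t =>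
    ae_of_ae_map (hx.measurable_noise t).aemeasurable (hx.map_noise t ▸ hS)
  filter_upwards [ae_all_iff.2 hωS] with ϖ hϖ t
  induction t with
  | zero => exact hx.zero ϖ ▸ hx₀
  | succ t ih => exact hx.succ t ϖ ▸ hK _ ih _ (hϖ t)

end IsNoiseDrivenChain

end Chain

section ReachAvoid

variable {Ω X W : Type*} {x : ℕ → Ω → X} {G : Set X} {U : X → ℝ≥0∞} {c ε : ℝ≥0∞}

-- For the first exit time `τ` from `G`: `stays G x t = {t ≤ τ}` and
-- `exitsAbove G U c x t = {τ = t, c ≤ U (x τ)}`.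
def stays (G : Set X) (x : ℕ → Ω → X) (t : ℕ) : Set Ω := {ϖ | ∀ s < t, x s ϖ ∈ G}

def exitsAbove (G : Set X) (U : X → ℝ≥0∞) (c : ℝ≥0∞) (x : ℕ → Ω → X) (t : ℕ) : Set Ω :=
  {ϖ | (∀ s < t, x s ϖ ∈ G) ∧ x t ϖ ∉ G ∧ c ≤ U (x t ϖ)}

lemma stays_zero : stays G x 0 = Set.univ := by simp [stays]

lemma exitsAbove_subset_stays (t : ℕ) : exitsAbove G U c x t ⊆ stays G x t := fun _ h => h.1

lemma stays_succ_subset (t : ℕ) : stays G x (t + 1) ⊆ stays G x t :=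
  fun _ h s hs => h s (hs.trans t.lt_succ_self)

lemma disjoint_stays_succ_exitsAbove (t : ℕ) :
    Disjoint (stays G x (t + 1)) (exitsAbove G U c x t) :=
  Set.disjoint_left.2 fun _ h h' => h'.2.1 (h t t.lt_succ_self)

lemma exists_first_exit_of_not_reach_avoid {y : ℕ → X} {Xt Xu : Set X}
    (hG : Disjoint G Xu) (hdisj : Disjoint Xt Xu) (hy : ¬ ∃ t, y t ∈ Xt ∧ ∀ s ≤ t, y s ∉ Xu) :
    (∀ t, y t ∈ G) ∨ ∃ t, (∀ s < t, y s ∈ G) ∧ y t ∉ G ∧ y t ∉ Xt := by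
  classical
  refine or_iff_not_imp_left.2 fun h => ?_
  simp only [not_forall] at h
  have hmin : ∀ s < Nat.find h, y s ∈ G := fun s hs => not_not.1 (Nat.find_min h hs)
  refine ⟨Nat.find h, hmin, Nat.find_spec h, fun ht => hy ⟨_, ht, fun s hs => ?_⟩⟩
  rcases hs.lt_or_eq with hs | rfl
  · exact Set.disjoint_left.1 hG (hmin s hs)
  · exact Set.disjoint_left.1 hdisj ht

lemma mem_iInter_stays_union_iUnion_exitsAbove {K Xt Xu : Set X} {ϖ : Ω} (hK : ∀ t, x t ϖ ∈ K)
    (hGXu : Disjoint G Xu) (hdisj : Disjoint Xt Xu) (hexit : ∀ y ∈ K \ Xt, y ∉ G → c ≤ U y)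
    (hfail : ¬ ∃ t, x t ϖ ∈ Xt ∧ ∀ s ≤ t, x s ϖ ∉ Xu) :
    ϖ ∈ (⋂ t, stays G x t) ∪ ⋃ t, exitsAbove G U c x t := by
  rcases exists_first_exit_of_not_reach_avoid hGXu hdisj hfail with hstay | ⟨t, hpre, hG, hXt⟩
  · exact Or.inl (Set.mem_iInter.2 fun _ s _ => hstay s)
  · exact Or.inr (Set.mem_iUnion.2 ⟨t, hpre, hG, hexit _ ⟨hK t, hXt⟩ hG⟩)

variable {mΩ : MeasurableSpace Ω} [MeasurableSpace X] [MeasurableSpace W] {μ : Measure Ω}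
  {d : Measure W} {g : X → W → X} {x₀ : X} {ω : ℕ → Ω → W}

namespace IsNoiseDrivenChain

variable (hx : IsNoiseDrivenChain μ d g x₀ ω x)
include hx

lemma measurableSet_stays (hG : MeasurableSet G) (t : ℕ) : MeasurableSet (stays G x t) := by
  simp only [stays, Set.ofPred_forall]
  exact .iInter fun s => .iInter fun _ => hx.measurable s hG

lemma measurableSet_stays_succ (hG : MeasurableSet G) (t : ℕ) :
    MeasurableSet[noiseBefore ω t] (stays G x (t + 1)) := by
  simp only [stays, Set.ofPred_forall]
  exact .iInter fun s => .iInter fun hs =>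
    (hx.measurable_noiseBefore s).mono (noiseBefore_mono (Nat.lt_succ_iff.1 hs)) le_rfl hG

lemma measurableSet_exitsAbove (hG : MeasurableSet G) (hU : Measurable U) (t : ℕ) :
    MeasurableSet (exitsAbove G U c x t) :=
  (hx.measurableSet_stays hG t).inter <| (hx.measurable t hG).compl.inter <|
    measurableSet_le measurable_const (hU.comp (hx.measurable t))

variable [IsProbabilityMeasure μ] (hG : MeasurableSet G) (hU : Measurable U)
  (hdec : ∀ y ∈ G, ∫⁻ w, U (g y w) ∂d + ε ≤ U y)
include hG hU hdec

lemma setLIntegral_stays_succ_add_le (t : ℕ) :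
    ∫⁻ ϖ in stays G x (t + 1), U (x (t + 1) ϖ) ∂μ
        + (ε * μ (stays G x (t + 1)) + c * μ (exitsAbove G U c x t))
      ≤ ∫⁻ ϖ in stays G x t, U (x t ϖ) ∂μ := by
  have hstays := hx.measurableSet_stays_succ hG t
  have hexits := hx.measurableSet_exitsAbove (c := c) hG hU t
  have hdecrease : ∫⁻ ϖ in stays G x (t + 1), U (x (t + 1) ϖ) ∂μ + ε * μ (stays G x (t + 1))
      ≤ ∫⁻ ϖ in stays G x (t + 1), U (x t ϖ) ∂μ := by
    rw [hx.setLIntegral_succ_eq hstays hU, ← setLIntegral_const,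
      ← lintegral_add_right _ measurable_const]
    exact setLIntegral_mono' (hx.noiseBefore_le t _ hstays) fun ϖ h => hdec _ (h t t.lt_succ_self)
  have hexit : c * μ (exitsAbove G U c x t) ≤ ∫⁻ ϖ in exitsAbove G U c x t, U (x t ϖ) ∂μ := by
    rw [← setLIntegral_const]
    exact setLIntegral_mono' hexits fun ϖ h => h.2.2
  calc _ ≤ ∫⁻ ϖ in stays G x (t + 1), U (x t ϖ) ∂μ
        + ∫⁻ ϖ in exitsAbove G U c x t, U (x t ϖ) ∂μ := by
        rw [← add_assoc]; gcongr
    _ = ∫⁻ ϖ in stays G x (t + 1) ∪ exitsAbove G U c x t, U (x t ϖ) ∂μ :=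
        (lintegral_union hexits (disjoint_stays_succ_exitsAbove t)).symm
    _ ≤ ∫⁻ ϖ in stays G x t, U (x t ϖ) ∂μ :=
        lintegral_mono_set (Set.union_subset (stays_succ_subset t) (exitsAbove_subset_stays t))

lemma setLIntegral_stays_add_sum_le (t : ℕ) :
    ∫⁻ ϖ in stays G x t, U (x t ϖ) ∂μ
        + ∑ s ∈ Finset.range t, (ε * μ (stays G x (s + 1)) + c * μ (exitsAbove G U c x s))
      ≤ U x₀ := by
  induction t with
  | zero => simp [stays_zero, hx.zero]
  | succ t ih =>
    calc _ = ∫⁻ ϖ in stays G x (t + 1), U (x (t + 1) ϖ) ∂μ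
          + (ε * μ (stays G x (t + 1)) + c * μ (exitsAbove G U c x t))
          + ∑ s ∈ Finset.range t, (ε * μ (stays G x (s + 1)) + c * μ (exitsAbove G U c x s)) := by
          rw [Finset.sum_range_succ]; ring
      _ ≤ U x₀ := (add_le_add_left (hx.setLIntegral_stays_succ_add_le hG hU hdec t) _).trans ih

lemma measure_iInter_stays_eq_zero (hε : ε ≠ 0) (hU₀ : U x₀ ≠ ∞) :
    μ (⋂ t, stays G x t) = 0 := by
  have hsum : ∑' _ : ℕ, ε * μ (⋂ t, stays G x t) ≤ U x₀ :=
    ENNReal.tsum_le_of_sum_range_le fun t => calc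
      _ ≤ ∑ s ∈ Finset.range t, ε * μ (stays G x (s + 1)) :=
        Finset.sum_le_sum fun s _ => by gcongr; exact Set.iInter_subset _ _
      _ ≤ U x₀ := by
        simpa using le_add_self.trans (hx.setLIntegral_stays_add_sum_le (c := 0) hG hU hdec t)
  by_contra h
  exact hU₀ (top_le_iff.1 (ENNReal.tsum_const_eq_top_of_ne_zero (α := ℕ) (mul_ne_zero hε h) ▸ hsum))

lemma mul_measure_iUnion_exitsAbove_le : c * μ (⋃ t, exitsAbove G U c x t) ≤ U x₀ :=
  calc _ ≤ c * ∑' t, μ (exitsAbove G U c x t) := by gcongr; exact measure_iUnion_le _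
    _ = ∑' t, c * μ (exitsAbove G U c x t) := ENNReal.tsum_mul_left.symm
    _ ≤ U x₀ := ENNReal.tsum_le_of_sum_range_le fun t =>
      (Finset.sum_le_sum fun s _ => le_add_self).trans
        (le_add_self.trans (hx.setLIntegral_stays_add_sum_le hG hU hdec t))

lemma mul_measure_le_of_ae_mem_stays_or_exitsAbove (hε : ε ≠ 0) (hU₀ : U x₀ ≠ ∞) {E : Set Ω}
    (hE : ∀ᵐ ϖ ∂μ, ϖ ∈ E → ϖ ∈ (⋂ t, stays G x t) ∪ ⋃ t, exitsAbove G U c x t) :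
    c * μ E ≤ U x₀ :=
  calc _ ≤ c * (μ (⋂ t, stays G x t) + μ (⋃ t, exitsAbove G U c x t)) := by
        gcongr; exact (measure_mono_ae hE).trans (measure_union_le _ _)
    _ ≤ U x₀ := by
        rw [hx.measure_iInter_stays_eq_zero hG hU hdec hε hU₀, zero_add]
        exact hx.mul_measure_iUnion_exitsAbove_le hG hU hdec

end IsNoiseDrivenChain

end ReachAvoid

theorem rasm_certifies_probabilistic_reach_avoid_general
    {m n q : ℕ}
    (𝒳 : Set (Fin m → ℝ)) (hXcpt : IsCompact 𝒳) (hXmeas : MeasurableSet 𝒳)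
    (f : (Fin m → ℝ) → (Fin n → ℝ) → (Fin q → ℝ) → (Fin m → ℝ))
    (hf : Measurable fun xuw : (Fin m → ℝ) × (Fin n → ℝ) × (Fin q → ℝ) =>
      f xuw.1 xuw.2.1 xuw.2.2)
    (π : (Fin m → ℝ) → (Fin n → ℝ)) (hπ : Measurable π)
    (d : Measure (Fin q → ℝ)) [IsProbabilityMeasure d]
    (hinv : ∀ x ∈ 𝒳, ∀ w ∈ measureSupport d, f x (π x) w ∈ 𝒳)
    (X0 Xt Xu : Set (Fin m → ℝ))
    (hX0sub : X0 ⊆ 𝒳)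
    (hXtmeas : MeasurableSet Xt)
    (hdisj : Disjoint Xt Xu)
    (p : ℝ) (hp0 : 0 ≤ p) (hp1 : p < 1)
    {Ω : Type*} {m0 : MeasurableSpace Ω} (μ : Measure Ω) [IsProbabilityMeasure μ]
    (ω : ℕ → Ω → (Fin q → ℝ))
    (hωmeas : ∀ t, Measurable (ω t))
    (hωindep : iIndepFun ω μ)
    (hωlaw : ∀ t, μ.map (ω t) = d)
    (x₀ : Fin m → ℝ) (hx₀ : x₀ ∈ X0)
    (traj : ℕ → Ω → (Fin m → ℝ))
    (htraj0 : ∀ ϖ, traj 0 ϖ = x₀)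
    (htraj : ∀ t ϖ, traj (t + 1) ϖ = f (traj t ϖ) (π (traj t ϖ)) (ω t ϖ))
    (V : (Fin m → ℝ) → ℝ) (hVcont : ContinuousOn V 𝒳)
    (hVnonneg : ∀ x ∈ 𝒳, 0 ≤ V x)
    (hVinit : ∀ x ∈ X0, V x ≤ 1)
    (hVunsafe : ∀ x ∈ Xu, 1 / (1 - p) ≤ V x)
    (hVdec : ∃ ε > 0, ∀ x ∈ 𝒳 \ Xt, V x ≤ 1 / (1 - p) →
      ∫ w, V (f x (π x) w) ∂d ≤ V x - ε) :
    ENNReal.ofReal p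
      ≤ μ {ϖ | ∃ t : ℕ, traj t ϖ ∈ Xt ∧ ∀ t' ≤ t, traj t' ϖ ∉ Xu} := by
  obtain ⟨ε, hε, hVdec⟩ := hVdec
  set U : (Fin m → ℝ) → ℝ≥0∞ := fun y => ENNReal.ofReal (𝒳.indicator V y)
  set c := ENNReal.ofReal (1 / (1 - p))
  set G := (𝒳 \ Xt) ∩ {y | U y < c}
  have hU : Measurable U := ENNReal.measurable_ofReal.comp (hVcont.measurable_indicator hXmeas)
  have hG : MeasurableSet G := (hXmeas.diff hXtmeas).inter (measurableSet_lt hU measurable_const)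
  have hsupp : ∀ᵐ w ∂d, w ∈ measureSupport d :=
    measureSupport_eq_support d ▸ Measure.support_mem_ae
  have hchain : IsNoiseDrivenChain μ d (fun y w => f y (π y) w) x₀ ω traj :=
    ⟨hωmeas, hωindep, hωlaw,
      hf.comp (measurable_fst.prodMk ((hπ.comp measurable_fst).prodMk measurable_snd)),
      htraj0, htraj⟩
  have hUeq : ∀ y ∈ 𝒳, U y = ENNReal.ofReal (V y) := fun y hy =>
    congrArg ENNReal.ofReal (Set.indicator_of_mem hy V)
  have hVlt : ∀ y ∈ G, V y < 1 / (1 - p) := fun y hy =>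
    (ENNReal.ofReal_lt_ofReal_iff'.1 (hUeq y hy.1.1 ▸ hy.2)).1
  have hdec : ∀ y ∈ G, ∫⁻ w, U (f y (π y) w) ∂d + ENNReal.ofReal ε ≤ U y := fun y hy =>
    hUeq y hy.1.1 ▸ lintegral_ofReal_indicator_comp_add_le hXcpt hXmeas hVcont hVnonneg
      (hchain.measurable_step.comp measurable_prodMk_left) (hsupp.mono (hinv y hy.1.1)) hε.le
      (hVdec y hy.1 (hVlt y hy).le)
  have hU₀ : U x₀ ≤ 1 := hUeq x₀ (hX0sub hx₀) ▸ ENNReal.ofReal_le_one.2 (hVinit x₀ hx₀)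
  have hGXu : Disjoint G Xu :=
    Set.disjoint_left.2 fun y hy hu => (hVlt y hy).not_ge (hVunsafe y hu)
  have hcover : ∀ᵐ ϖ ∂μ, ϖ ∈ {ϖ | ∃ t, traj t ϖ ∈ Xt ∧ ∀ t' ≤ t, traj t' ϖ ∉ Xu}ᶜ →
      ϖ ∈ (⋂ t, stays G traj t) ∪ ⋃ t, exitsAbove G U c traj t := by
    filter_upwards [hchain.ae_forall_mem (hX0sub hx₀) hsupp hinv] with ϖ h𝒳
    exact mem_iInter_stays_union_iUnion_exitsAbove h𝒳 hGXu hdisj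
      fun y hy hyG => not_lt.1 fun h => hyG ⟨hy, h⟩
  exact ofReal_le_measure_of_mul_measure_compl_le hp0 hp1
    ((hchain.mul_measure_le_of_ae_mem_stays_or_exitsAbove hG hU hdec (ENNReal.ofReal_pos.2 hε).ne'
      (hU₀.trans_lt ENNReal.one_lt_top).ne hcover).trans hU₀)

/-- Theorem 1: a reach-avoid supermartingale (RASM) `V` with respect to the target set `Xt`,
the unsafe set `Xu` and the probability threshold `p ∈ [0,1)` certifies that the trajectory
process started at any initial state `x₀ ∈ X0` reaches `Xt` while avoiding `Xu` with
probability at least `p`. -/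
theorem rasm_certifies_probabilistic_reach_avoid
    {m n q : ℕ}
    (𝒳 : Set (Fin m → ℝ)) (hXcpt : IsCompact 𝒳) (hXmeas : MeasurableSet 𝒳)
    (f : (Fin m → ℝ) → (Fin n → ℝ) → (Fin q → ℝ) → (Fin m → ℝ))
    (hf : Measurable fun xuw : (Fin m → ℝ) × (Fin n → ℝ) × (Fin q → ℝ) =>
      f xuw.1 xuw.2.1 xuw.2.2)
    (π : (Fin m → ℝ) → (Fin n → ℝ)) (hπ : Measurable π)
    (d : Measure (Fin q → ℝ)) [IsProbabilityMeasure d]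
    (hinv : ∀ x ∈ 𝒳, ∀ w ∈ measureSupport d, f x (π x) w ∈ 𝒳)
    (X0 Xt Xu : Set (Fin m → ℝ))
    (hX0sub : X0 ⊆ 𝒳) (hXtsub : Xt ⊆ 𝒳) (hXusub : Xu ⊆ 𝒳)
    (hX0meas : MeasurableSet X0) (hXtmeas : MeasurableSet Xt) (hXumeas : MeasurableSet Xu)
    (hdisj : Disjoint Xt Xu)
    (p : ℝ) (hp0 : 0 ≤ p) (hp1 : p < 1)
    {Ω : Type*} {m0 : MeasurableSpace Ω} (μ : Measure Ω) [IsProbabilityMeasure μ]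
    (ω : ℕ → Ω → (Fin q → ℝ))
    (hωmeas : ∀ t, Measurable (ω t))
    (hωindep : iIndepFun ω μ)
    (hωlaw : ∀ t, μ.map (ω t) = d)
    (x₀ : Fin m → ℝ) (hx₀ : x₀ ∈ X0)
    (traj : ℕ → Ω → (Fin m → ℝ))
    (htraj0 : ∀ ϖ, traj 0 ϖ = x₀)
    (htraj : ∀ t ϖ, traj (t + 1) ϖ = f (traj t ϖ) (π (traj t ϖ)) (ω t ϖ))
    (V : (Fin m → ℝ) → ℝ) (hVcont : ContinuousOn V 𝒳)
    (hVnonneg : ∀ x ∈ 𝒳, 0 ≤ V x)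
    (hVinit : ∀ x ∈ X0, V x ≤ 1)
    (hVunsafe : ∀ x ∈ Xu, 1 / (1 - p) ≤ V x)
    (hVdec : ∃ ε > 0, ∀ x ∈ 𝒳 \ Xt, V x ≤ 1 / (1 - p) →
      ∫ w, V (f x (π x) w) ∂d ≤ V x - ε) :
    ENNReal.ofReal p
      ≤ μ {ϖ | ∃ t : ℕ, traj t ϖ ∈ Xt ∧ ∀ t' ≤ t, traj t' ϖ ∉ Xu} :=
  rasm_certifies_probabilistic_reach_avoid_general 𝒳 hXcpt hXmeas f hf π hπ d hinv X0 Xt Xu hX0sub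
    hXtmeas hdisj p hp0 hp1 (m0 := m0) μ ω hωmeas hωindep hωlaw x₀ hx₀ traj htraj0 htraj V hVcont
    hVnonneg hVinit hVunsafe hVdec
end

section
/- Theorem 2 (soundness of discretization-based verification of the expected decrease condition): Let 𝒳 ⊆ ℝ^m be compact, equip ℝ^m, ℝ^n, ℝ^p with the ℓ¹ norm, and let d be a probability distribution on ℝ^p. Let f : ℝ^m × ℝ^n × ℝ^p → ℝ^m satisfy ‖f(x, u, w) − f(x', u', w)‖₁ ≤ L_f·(‖x − x'‖₁ + ‖u − u'‖₁) for all x, x', u, u', w; let π : ℝ^m → ℝ^n be L_π-Lipschitz; let V : ℝ^m → ℝ be L_V-Lipschitz and bounded below on the range of (x,w) ↦ f(x, π(x), w) for x ∈ 𝒳, w in the support of d, so that all integrals below are well defined. Let 𝒳_t ⊆ 𝒳, let c > 0, let τ > 0, and set K = L_V·(L_f·(L_π + 1) + 1). Let 𝒳̃ ⊆ 𝒳 be a finite set such that for every x ∈ 𝒳 \ 𝒳_t with V(x) ≤ c there exists x̃ ∈ 𝒳̃ with ‖x − x̃‖₁ ≤ τ and ∫ V(f(x̃, π(x̃), w)) dd(w)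 < V(x̃) − τ·K. Then there exists ε > 0 such that for every x ∈ 𝒳 \ 𝒳_t with V(x) ≤ c, ∫ V(f(x, π(x), w)) dd(w) ≤ V(x) − ε. -/
open MeasureTheory
open scoped NNReal

/-- Theorem 2 (soundness of the discretization-based verifier): if at every point of a finite
discretization grid relevant to `{x ∈ 𝒳 \ Xt | V x ≤ c}` the strict expected-decrease
condition with slack `τ·K` holds, where `K = L_V·(L_f·(L_π + 1) + 1)`, then `V` satisfies the
expected decrease condition of an RASM: there is `ε > 0` with
`∫ V(f(x, π(x), w)) dd(w) ≤ V(x) − ε` for every `x ∈ 𝒳 \ Xt` with `V x ≤ c`. -/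
theorem discretization_verifier_sound
    {m n q : ℕ}
    (𝒳 : Set (Fin m → ℝ)) (hXcpt : IsCompact 𝒳)
    (d : Measure (Fin q → ℝ)) [IsProbabilityMeasure d]
    (f : (Fin m → ℝ) → (Fin n → ℝ) → (Fin q → ℝ) → (Fin m → ℝ))
    (π : (Fin m → ℝ) → (Fin n → ℝ))
    (V : (Fin m → ℝ) → ℝ)
    (Lf Lπ LV : ℝ≥0)
    (hf : ∀ (x x' : Fin m → ℝ) (u u' : Fin n → ℝ) (w : Fin q → ℝ),
      ∑ i, |f x u w i - f x' u' w i|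
        ≤ Lf * ((∑ i, |x i - x' i|) + ∑ j, |u j - u' j|))
    (hπ : ∀ x x' : Fin m → ℝ, ∑ j, |π x j - π x' j| ≤ Lπ * ∑ i, |x i - x' i|)
    (hV : ∀ y y' : Fin m → ℝ, |V y - V y'| ≤ LV * ∑ i, |y i - y' i|)
    (hVbdd : ∃ B : ℝ, ∀ x ∈ 𝒳, ∀ w ∈ measureSupport d, B ≤ V (f x (π x) w))
    (hint : ∀ x ∈ 𝒳, Integrable (fun w => V (f x (π x) w)) d)
    (Xt : Set (Fin m → ℝ)) (hXt : Xt ⊆ 𝒳)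
    (c : ℝ) (hc : 0 < c) (τ : ℝ) (hτ : 0 < τ)
    (K : ℝ) (hK : K = LV * (Lf * (Lπ + 1) + 1))
    (grid : Finset (Fin m → ℝ)) (hgrid : ↑grid ⊆ 𝒳)
    (hverified : ∀ x ∈ 𝒳 \ Xt, V x ≤ c → ∃ z ∈ grid,
      (∑ i, |x i - z i|) ≤ τ ∧ ∫ w, V (f z (π z) w) ∂d < V z - τ * K) :
    ∃ ε > 0, ∀ x ∈ 𝒳 \ Xt, V x ≤ c →
      ∫ w, V (f x (π x) w) ∂d ≤ V x - ε := by
  classical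
  set δ : (Fin m → ℝ) → ℝ := fun z => V z - τ * K - ∫ w, V (f z (π z) w) ∂d with hδ
  set S : Finset (Fin m → ℝ) := grid.filter (fun z => 0 < δ z) with hS
  set T : Finset ℝ := insert (1 : ℝ) (S.image δ) with hT
  have hTne : T.Nonempty := ⟨1, Finset.mem_insert_self _ _⟩
  refine ⟨T.min' hTne, ?_, ?_⟩
  · have hmem : T.min' hTne ∈ insert (1 : ℝ) (S.image δ) := T.min'_mem hTne
    rcases Finset.mem_insert.1 hmem with h | h
    · rw [h]; norm_num
    · rcases Finset.mem_image.1 h with ⟨z, hz, hzeq⟩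
      rw [← hzeq]
      exact (Finset.mem_filter.1 hz).2
  · intro x hx hVx
    obtain ⟨z, hzg, hdist, hzint⟩ := hverified x hx hVx
    have hzS : z ∈ S := Finset.mem_filter.2 ⟨hzg, by simp only [hδ]; linarith⟩
    have hεle : T.min' hTne ≤ δ z :=
      Finset.min'_le _ _ (Finset.mem_insert_of_mem (Finset.mem_image_of_mem δ hzS))
    have hxX : x ∈ 𝒳 := hx.1
    have hzX : z ∈ 𝒳 := hgrid hzg
    -- pointwise bound
    have hpt : ∀ w, V (f x (π x) w) - V (f z (π z) w) ≤ (LV : ℝ) * (Lf * (Lπ + 1)) * τ := by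
      intro w
      have h1 : |V (f x (π x) w) - V (f z (π z) w)|
          ≤ LV * ∑ i, |f x (π x) w i - f z (π z) w i| := hV _ _
      have h2 : ∑ i, |f x (π x) w i - f z (π z) w i|
          ≤ Lf * ((∑ i, |x i - z i|) + ∑ j, |π x j - π z j|) := hf _ _ _ _ _
      have h3 : ∑ j, |π x j - π z j| ≤ Lπ * ∑ i, |x i - z i| := hπ _ _
      have h4 : (∑ i, |x i - z i|) + ∑ j, |π x j - π z j| ≤ (Lπ + 1) * τ := by
        have hsum : (∑ i, |x i - z i|) + ∑ j, |π x j - π z j|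
            ≤ (∑ i, |x i - z i|) + Lπ * ∑ i, |x i - z i| := by linarith
        have : (∑ i, |x i - z i|) + Lπ * ∑ i, |x i - z i|
            = (Lπ + 1) * ∑ i, |x i - z i| := by ring
        rw [this] at hsum
        refine hsum.trans ?_
        have : (0:ℝ) ≤ (Lπ : ℝ) + 1 := by positivity
        exact mul_le_mul_of_nonneg_left hdist this
      have h5 : ∑ i, |f x (π x) w i - f z (π z) w i| ≤ Lf * ((Lπ + 1) * τ) :=
        h2.trans (mul_le_mul_of_nonneg_left h4 (by positivity))
      have h6 : |V (f x (π x) w) - V (f z (π z) w)| ≤ LV * (Lf * ((Lπ + 1) * τ)) :=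
        h1.trans (mul_le_mul_of_nonneg_left h5 (by positivity))
      calc V (f x (π x) w) - V (f z (π z) w)
          ≤ |V (f x (π x) w) - V (f z (π z) w)| := le_abs_self _
        _ ≤ LV * (Lf * ((Lπ + 1) * τ)) := h6
        _ = (LV : ℝ) * (Lf * (Lπ + 1)) * τ := by ring
    have hix := hint x hxX
    have hiz := hint z hzX
    have hintineq : ∫ w, V (f x (π x) w) ∂d - ∫ w, V (f z (π z) w) ∂d
        ≤ (LV : ℝ) * (Lf * (Lπ + 1)) * τ := by
      rw [← integral_sub hix hiz]
      calc ∫ w, (V (f x (π x) w) - V (f z (π z) w)) ∂d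
          ≤ ∫ _w, (LV : ℝ) * (Lf * (Lπ + 1)) * τ ∂d :=
            integral_mono (hix.sub hiz) (integrable_const _) hpt
        _ = (LV : ℝ) * (Lf * (Lπ + 1)) * τ := by
            simp [integral_const, measure_univ]
    have hVzx : V z - V x ≤ LV * τ := by
      have h1 : |V z - V x| ≤ LV * ∑ i, |z i - x i| := hV _ _
      have h2 : (∑ i, |z i - x i|) = ∑ i, |x i - z i| := by
        apply Finset.sum_congr rfl; intro i _; rw [abs_sub_comm]
      rw [h2] at h1
      calc V z - V x ≤ |V z - V x| := le_abs_self _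
        _ ≤ LV * ∑ i, |x i - z i| := h1
        _ ≤ LV * τ := mul_le_mul_of_nonneg_left hdist (by positivity)
    have hδz : ∫ w, V (f z (π z) w) ∂d = V z - τ * K - δ z := by simp [hδ]
    have hτK : τ * K = (LV : ℝ) * (Lf * (Lπ + 1)) * τ + LV * τ := by
      rw [hK]; push_cast; ring
    linarith [hεle, hintineq, hVzx]
end

section
/- Expected-decrease transfer inequality: Equip ℝ^m, ℝ^n, ℝ^p with the ℓ¹ norm and let d be a probability distribution on ℝ^p. Let f : ℝ^m × ℝ^n × ℝ^p → ℝ^m satisfy ‖f(x, u, w) − f(x', u', w)‖₁ ≤ L_f·(‖x − x'‖₁ + ‖u − u'‖₁) for all x, x', u, u', w; let π : ℝ^m → ℝ^n be L_π-Lipschitz; let V : ℝ^m → ℝ be L_V-Lipschitz; and assume the functions w ↦ V(f(x, π(x), w)) and w ↦ V(f(x̃, π(x̃), w)) are d-integrable. Set K = L_V·(L_f·(L_π + 1) + 1). Then for all x, x̃ ∈ ℝ^m with ‖x − x̃‖₁ ≤ τ, V(x) − ∫ V(f(x, π(x), w)) dd(w) ≥ V(x̃) − τ·K − ∫ V(f(x̃,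 π(x̃), w)) dd(w). -/
open MeasureTheory
open scoped NNReal

/-- Expected-decrease transfer inequality: with `K = L_V·(L_f·(L_π + 1) + 1)`, the one-step
expected decrease of `V` at a state `x` within ℓ¹ distance `τ` of a grid point `z` is at
least the expected decrease at `z` minus `τ·K`. -/
theorem expected_decrease_transfer
    {m n q : ℕ}
    (d : Measure (Fin q → ℝ)) [IsProbabilityMeasure d]
    (f : (Fin m → ℝ) → (Fin n → ℝ) → (Fin q → ℝ) → (Fin m → ℝ))
    (π : (Fin m → ℝ) → (Fin n → ℝ))
    (V : (Fin m → ℝ) → ℝ)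
    (Lf Lπ LV : ℝ≥0)
    (hf : ∀ (x x' : Fin m → ℝ) (u u' : Fin n → ℝ) (w : Fin q → ℝ),
      ∑ i, |f x u w i - f x' u' w i|
        ≤ Lf * ((∑ i, |x i - x' i|) + ∑ j, |u j - u' j|))
    (hπ : ∀ x x' : Fin m → ℝ, ∑ j, |π x j - π x' j| ≤ Lπ * ∑ i, |x i - x' i|)
    (hV : ∀ y y' : Fin m → ℝ, |V y - V y'| ≤ LV * ∑ i, |y i - y' i|)
    (K : ℝ) (hK : K = LV * (Lf * (Lπ + 1) + 1))
    (τ : ℝ)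
    (x z : Fin m → ℝ)
    (hxint : Integrable (fun w => V (f x (π x) w)) d)
    (hzint : Integrable (fun w => V (f z (π z) w)) d)
    (hclose : ∑ i, |x i - z i| ≤ τ) :
    V z - τ * K - ∫ w, V (f z (π z) w) ∂d
      ≤ V x - ∫ w, V (f x (π x) w) ∂d := by

  have hS : (0:ℝ) ≤ ∑ i, |x i - z i| := Finset.sum_nonneg fun i _ => abs_nonneg _
  have hτ : (0:ℝ) ≤ τ := le_trans hS hclose
  -- pointwise bound on the integrands
  have hpt : ∀ w, |V (f x (π x) w) - V (f z (π z) w)| ≤ (LV * (Lf * (Lπ + 1))) * τ := by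
    intro w
    calc |V (f x (π x) w) - V (f z (π z) w)|
        ≤ LV * ∑ i, |f x (π x) w i - f z (π z) w i| := hV _ _
      _ ≤ LV * (Lf * ((∑ i, |x i - z i|) + ∑ j, |π x j - π z j|)) := by
          gcongr; exact hf x z (π x) (π z) w
      _ ≤ LV * (Lf * ((∑ i, |x i - z i|) + Lπ * ∑ i, |x i - z i|)) := by
          gcongr; exact hπ x z
      _ = (LV * (Lf * (Lπ + 1))) * ∑ i, |x i - z i| := by ring
      _ ≤ (LV * (Lf * (Lπ + 1))) * τ := by gcongr
  -- bound on the difference of integrals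
  have hint : |(∫ w, V (f x (π x) w) ∂d) - ∫ w, V (f z (π z) w) ∂d|
      ≤ (LV * (Lf * (Lπ + 1))) * τ := by
    rw [← integral_sub hxint hzint]
    calc |∫ w, (V (f x (π x) w) - V (f z (π z) w)) ∂d|
        ≤ ∫ w, |V (f x (π x) w) - V (f z (π z) w)| ∂d := by simpa using norm_integral_le_integral_norm (μ := d) fun w => V (f x (π x) w) - V (f z (π z) w)
      _ ≤ ∫ _w, (LV * (Lf * (Lπ + 1))) * τ ∂d := by
          apply integral_mono ((hxint.sub hzint).abs) (integrable_const _)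
          intro w; exact hpt w
      _ = (LV * (Lf * (Lπ + 1))) * τ := by simp
  have hVxz : |V x - V z| ≤ LV * τ := by
    calc |V x - V z| ≤ LV * ∑ i, |x i - z i| := hV x z
      _ ≤ LV * τ := by gcongr
  have h1 := abs_le.mp hint
  have h2 := abs_le.mp hVxz
  have : τ * K = LV * τ + (LV * (Lf * (Lπ + 1))) * τ := by rw [hK]; ring
  linarith [h1.1, h2.1]
end
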